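/- Let n ≥ 2. For every 1 ≤ i ≤ n, the determinant of the leading principal i×i submatrix of N (formed by its first i rows and columns) equals ((21 + 7√3)/30)·((2+√3)/7)^i + ((21 − 7√3)/30)·((2−√3)/7)^i. -/

import Mathlib

/-- The tridiagonal matrix `N` (of size `(n+1) × (n+1)`). -/
noncomputable def Nmat (n : ℕ) : Matrix (Fin (n+1)) (Fin (n+1)) ℝ :=
  Matrix.of fun i j =>
    if i = j then (if i.val = 0 ∨ i.val = n then 3/5 else 4/7)
    else if i.val + 1 = j.val ∨ j.val + 1 = i.val then
      (if min i.val j.val = 0 ∨ max i.val j.val = n then -(1/Real.sqrt 35) else -(1/7))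
    else 0

/-!
For `i ≤ n` the leading `i × i` block of `N` is a symmetric tridiagonal matrix whose entries are
constant (`4/7` on the diagonal, `-1/7` next to it) except for the corner entries `3/5` and
`-1/√35`. Expanding along the first row gives the continuant recurrence
`D (k+2) = a D (k+1) - b² D k`, so for constant entries `(r - s) D k = r^(k+1) - s^(k+1)` where
`r, s` are the roots of `x² - a x + b²`, here `(2 ± √3)/7`. One more expansion along the first
row accounts for the corner entries.
-/

namespace Matrix

variable {R : Type*} [CommRing R]

theorem det_eq_of_row_zero_col_zero_eq_zero {k : ℕ} (M : Matrix (Fin (k + 2)) (Fin (k + 2)) R)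
    (hrow : ∀ j : Fin k, M 0 j.succ.succ = 0) (hcol : ∀ i : Fin k, M i.succ.succ 0 = 0) :
    M.det = M 0 0 * (M.submatrix Fin.succ Fin.succ).det
      - M 0 1 * M 1 0 * (M.submatrix (Fin.succ ∘ Fin.succ) (Fin.succ ∘ Fin.succ)).det := by
  have hminor : (M.submatrix Fin.succ (Fin.succAbove 1)).det
      = M 1 0 * (M.submatrix (Fin.succ ∘ Fin.succ) (Fin.succ ∘ Fin.succ)).det := by
    rw [det_succ_column_zero, Fin.sum_univ_succ]
    simp [hcol, Fin.one_succAbove_succ, Function.comp_def]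
  rw [det_succ_row_zero, Fin.sum_univ_succ, Fin.sum_univ_succ]
  simp only [hrow, mul_zero, zero_mul, Finset.sum_const_zero, add_zero, Fin.succAbove_zero,
    Fin.succ_zero_eq_one, hminor, Fin.val_zero, Fin.val_one, pow_zero, pow_one]
  ring

/-- `d m` sits at position `(m, m)`, and `e m` at `(m, m + 1)` and `(m + 1, m)`. -/
def symmTridiagonal (d e : ℕ → R) (k : ℕ) : Matrix (Fin k) (Fin k) R :=
  of fun i j =>
    if i = j then d i
    else if (i : ℕ) + 1 = j ∨ (j : ℕ) + 1 = i then e (min i j)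
    else 0

variable (d e : ℕ → R)

theorem symmTridiagonal_submatrix_succ (k : ℕ) :
    (symmTridiagonal d e (k + 1)).submatrix Fin.succ Fin.succ
      = symmTridiagonal (fun m => d (m + 1)) (fun m => e (m + 1)) k := by
  ext i j
  simp [symmTridiagonal, Nat.add_min_add_right]

theorem det_symmTridiagonal_succ_succ (k : ℕ) :
    (symmTridiagonal d e (k + 2)).det
      = d 0 * (symmTridiagonal (fun m => d (m + 1)) (fun m => e (m + 1)) (k + 1)).det
        - e 0 ^ 2 * (symmTridiagonal (fun m => d (m + 2)) (fun m => e (m + 2)) k).det := by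
  rw [det_eq_of_row_zero_col_zero_eq_zero]
  · rw [← submatrix_submatrix, symmTridiagonal_submatrix_succ, symmTridiagonal_submatrix_succ]
    simp [symmTridiagonal, sq]
  · intro j; simp [symmTridiagonal, Fin.ext_iff]
  · intro j; simp [symmTridiagonal, Fin.ext_iff]

variable {r s a b : R}

theorem sub_mul_det_symmTridiagonal_const (hsum : r + s = a) (hprod : r * s = b ^ 2) :
    ∀ k, (r - s) * (symmTridiagonal (fun _ => a) (fun _ => b) k).det = r ^ (k + 1) - s ^ (k + 1)
  | 0 => by simp
  | 1 => by
    rw [det_fin_one]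
    simp only [symmTridiagonal, of_apply, if_pos]
    linear_combination (s - r) * hsum
  | k + 2 => by
    rw [det_symmTridiagonal_succ_succ]
    linear_combination a * sub_mul_det_symmTridiagonal_const hsum hprod (k + 1)
      - b ^ 2 * sub_mul_det_symmTridiagonal_const hsum hprod k
      - (r ^ (k + 2) - s ^ (k + 2)) * hsum + (r ^ (k + 1) - s ^ (k + 1)) * hprod

theorem sub_mul_det_symmTridiagonal_of_tail_const (hsum : r + s = a) (hprod : r * s = b ^ 2)
    (hd : ∀ m, d (m + 1) = a) (he : ∀ m, e (m + 1) = b) (k : ℕ) :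
    (r - s) * (symmTridiagonal d e (k + 1)).det
      = (d 0 * r - e 0 ^ 2) * r ^ k - (d 0 * s - e 0 ^ 2) * s ^ k := by
  cases k with
  | zero =>
    rw [det_fin_one]
    simp only [symmTridiagonal, of_apply, if_pos, Fin.val_zero]
    ring
  | succ k =>
    rw [det_symmTridiagonal_succ_succ]
    simp only [hd, he]
    linear_combination d 0 * sub_mul_det_symmTridiagonal_const hsum hprod (k + 1)
      - e 0 ^ 2 * sub_mul_det_symmTridiagonal_const hsum hprod k

end Matrix

open Matrix

theorem Nmat_submatrix_castLE {n i : ℕ} (h : i ≤ n) :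
    (Nmat n).submatrix (Fin.castLE (Nat.le_succ_of_le h)) (Fin.castLE (Nat.le_succ_of_le h))
      = symmTridiagonal (fun m => if m = 0 then 3 / 5 else 4 / 7)
          (fun m => if m = 0 then -(1 / √35) else -(1 / 7)) i := by
  ext a b
  have ha := a.isLt
  have hb := b.isLt
  simp only [Nmat, symmTridiagonal, submatrix_apply, of_apply, Fin.ext_iff, Fin.val_castLE,
    min_def, max_def]
  split_ifs <;> first | rfl | omega

theorem det_symmTridiagonal_Nmat_block (k : ℕ) :
    (symmTridiagonal (fun m => if m = 0 then 3 / 5 else 4 / 7)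
        (fun m => if m = 0 then -(1 / √35) else -(1 / 7)) (k + 1)).det
      = (21 + 7 * √3) / 30 * ((2 + √3) / 7) ^ (k + 1)
        + (21 - 7 * √3) / 30 * ((2 - √3) / 7) ^ (k + 1) := by
  have h3 : √3 ^ 2 = 3 := Real.sq_sqrt (by norm_num)
  have h35 : √35 ^ 2 = 35 := Real.sq_sqrt (by norm_num)
  have hrs : (2 + √3) / 7 - (2 - √3) / 7 ≠ 0 := by
    have : 0 < √3 := by positivity
    linarith
  refine mul_left_cancel₀ hrs ?_
  rw [sub_mul_det_symmTridiagonal_of_tail_const _ _ (a := 4 / 7) (b := -(1 / 7)) (by ring)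
    (by linear_combination -h3 / 49) (fun _ => rfl) (fun _ => rfl)]
  have he0 : (-(1 / √35)) ^ 2 = 1 / 35 := by rw [neg_sq, div_pow, one_pow, h35]
  have hr : ((2 + √3) / 7 - (2 - √3) / 7) * ((21 + 7 * √3) / 30) * ((2 + √3) / 7)
      = 3 / 5 * ((2 + √3) / 7) - 1 / 35 := by
    linear_combination (√3 + 5) / 105 * h3
  have hs : ((2 + √3) / 7 - (2 - √3) / 7) * ((21 - 7 * √3) / 30) * ((2 - √3) / 7)
      = -(3 / 5 * ((2 - √3) / 7) - 1 / 35) := by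
    linear_combination (√3 - 5) / 105 * h3
  simp only [if_pos, he0]
  linear_combination -((2 + √3) / 7) ^ k * hr - ((2 - √3) / 7) ^ k * hs

/-- For `n ≥ 2` and `1 ≤ i ≤ n`, the leading principal `i × i` minor of `N` equals
`((21+7√3)/30)·((2+√3)/7)^i + ((21−7√3)/30)·((2−√3)/7)^i`. -/
theorem det_leading_principal_submatrix_Nmat (n : ℕ)
    (i : ℕ) (h1 : 1 ≤ i) (h2 : i ≤ n) :
    ((Nmat n).submatrix (Fin.castLE (show i ≤ n + 1 by omega))
        (Fin.castLE (show i ≤ n + 1 by omega))).det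
      = ((21 + 7 * Real.sqrt 3) / 30) * ((2 + Real.sqrt 3) / 7)^i
        + ((21 - 7 * Real.sqrt 3) / 30) * ((2 - Real.sqrt 3) / 7)^i := by
  obtain ⟨k, rfl⟩ : ∃ k, i = k + 1 := ⟨i - 1, by omega⟩
  rw [Nmat_submatrix_castLE h2]
  exact det_symmTridiagonal_Nmat_block k
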